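/- Let S be a nonempty set, (G, ·, d) a group equipped with a metric d invariant under left translations, φ : S → S, g : S → G, and ε : S → ℝ≥0. Suppose f : S → G satisfies d(f(φ(x)), g(x)·f(x)) ≤ ε(x) for all x ∈ S. For n ≥ 1 and x ∈ S define ε_n(x) = (g(φⁿ⁻¹(x))·g(φⁿ⁻²(x))·…·g(x))⁻¹ · f(φⁿ(x)). Then for all x ∈ S and all n, p ∈ ℕ with n, p ≥ 1, one has d(ε_{n+p}(x), ε_n(x)) ≤ Σ_{k=1}^{p} ε(φ^{n+k-1}(x)). -/
import Mathlib


/-- The product `g(φ^{n-1}(x)) · g(φ^{n-2}(x)) · … · g(φ(x)) · g(x)`,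
with factors of higher index multiplied on the left. -/
def leftProd {S G : Type*} [Group G] (φ : S → S) (g : S → G) (x : S) : ℕ → G
  | 0 => 1
  | n + 1 => g (φ^[n] x) * leftProd φ g x n

theorem cauchy_estimate
    {S G : Type*} [Nonempty S] [Group G] [MetricSpace G]
    (hinv : ∀ x y z : G, dist (x * y) (x * z) = dist y z)
    (φ : S → S) (g : S → G) (ε : S → NNReal)
    (f : S → G) (hf : ∀ x : S, dist (f (φ x)) (g x * f x) ≤ ε x) :
    ∀ x : S, ∀ n p : ℕ, 1 ≤ n → 1 ≤ p →
      dist ((leftProd φ g x (n + p))⁻¹ * f (φ^[n + p] x))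
           ((leftProd φ g x n)⁻¹ * f (φ^[n] x)) ≤
        ∑ k ∈ Finset.range p, (ε (φ^[n + k] x) : ℝ) := by
  intro x n p _ _
  -- key one-step estimate
  have step : ∀ m : ℕ,
      dist ((leftProd φ g x (m + 1))⁻¹ * f (φ^[m + 1] x))
           ((leftProd φ g x m)⁻¹ * f (φ^[m] x)) ≤ (ε (φ^[m] x) : ℝ) := by
    intro m
    have h1 : (leftProd φ g x (m + 1))⁻¹ * f (φ^[m + 1] x)
        = (leftProd φ g x m)⁻¹ * ((g (φ^[m] x))⁻¹ * f (φ^[m + 1] x)) := by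
      simp [leftProd, mul_assoc]
    rw [h1, hinv]
    have h2 : dist ((g (φ^[m] x))⁻¹ * f (φ^[m + 1] x)) (f (φ^[m] x))
        = dist (f (φ^[m + 1] x)) (g (φ^[m] x) * f (φ^[m] x)) := by
      rw [← hinv (g (φ^[m] x)) _ _, mul_inv_cancel_left]
    rw [h2, Function.iterate_succ_apply']
    exact hf (φ^[m] x)
  -- induction on p (holds for all p ≥ 0)
  clear * - step
  induction p with
  | zero => simp
  | succ q ih =>
      calc dist ((leftProd φ g x (n + (q + 1)))⁻¹ * f (φ^[n + (q + 1)] x))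
             ((leftProd φ g x n)⁻¹ * f (φ^[n] x))
          ≤ dist ((leftProd φ g x (n + q + 1))⁻¹ * f (φ^[n + q + 1] x))
              ((leftProd φ g x (n + q))⁻¹ * f (φ^[n + q] x))
            + dist ((leftProd φ g x (n + q))⁻¹ * f (φ^[n + q] x))
              ((leftProd φ g x n)⁻¹ * f (φ^[n] x)) := by
            rw [show n + (q + 1) = n + q + 1 from rfl]
            exact dist_triangle _ _ _
        _ ≤ (ε (φ^[n + q] x) : ℝ) + ∑ k ∈ Finset.range q, (ε (φ^[n + k] x) : ℝ) :=
            add_le_add (step (n + q)) ih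
        _ = ∑ k ∈ Finset.range (q + 1), (ε (φ^[n + k] x) : ℝ) := by
            rw [Finset.sum_range_succ]; ring
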